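/- arXiv:2202.06676 — 4 statements merged into one kernel-verified Lean document; each statement's English description precedes it below -/
import Mathlib

section
/- Let g = [[a,b],[c,d]] ∈ SL₂(ℤ) and N a positive integer. Then an element T^n·γ with γ ∈ Γ(N) lies in Γ₁(N) ∩ g⁻¹Γ₁(N)g if and only if n_g divides n, where n_g = lcm(N/gcd(N,ac), N/gcd(N,c²)). Equivalently, (Γ₁(N) ∩ g⁻¹Γ₁(N)g)/Γ(N) = T^{n_g ℤ}·Γ(N)/Γ(N). -/
/-!
Modulo `N` the element `γ` is the identity, so only `T ^ n` matters, and `T ^ n` always lies in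
`Γ₁(N)`. For `g = [[a, b], [c, d]]` one has `g T^n g⁻¹ = 1 + n (a, c)ᵀ (-c, a)`, so it lies in
`Γ₁(N)` exactly when `N ∣ n a c` and `N ∣ n c²`. Finally `N ∣ m n ↔ N / gcd(N, m) ∣ n`, because
`N / gcd(N, m)` and `m / gcd(N, m)` are coprime.
-/

open CongruenceSubgroup ModularGroup MatrixGroups

theorem Nat.div_gcd_dvd_iff_dvd_mul {N : ℕ} (hN : 0 < N) (m k : ℕ) :
    N / N.gcd m ∣ k ↔ N ∣ m * k := by
  have hd : 0 < N.gcd m := Nat.gcd_pos_of_pos_left m hN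
  symm
  calc N ∣ m * k ↔ N / N.gcd m * N.gcd m ∣ m / N.gcd m * k * N.gcd m := by
        rw [Nat.div_mul_cancel (Nat.gcd_dvd_left N m), mul_right_comm,
          Nat.div_mul_cancel (Nat.gcd_dvd_right N m)]
    _ ↔ N / N.gcd m ∣ m / N.gcd m * k := Nat.mul_dvd_mul_iff_right hd
    _ ↔ N / N.gcd m ∣ k := (Nat.coprime_div_gcd_div_gcd hd).dvd_mul_left

theorem Int.natCast_div_gcd_dvd_iff_dvd_mul {N : ℕ} (hN : 0 < N) (m n : ℤ) :
    ((N / Int.gcd N m : ℕ) : ℤ) ∣ n ↔ (N : ℤ) ∣ m * n := by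
  rw [Int.natCast_dvd, Int.natCast_dvd, Int.natAbs_mul, Int.gcd, Int.natAbs_natCast]
  exact Nat.div_gcd_dvd_iff_dvd_mul hN m.natAbs n.natAbs

theorem Int.natCast_lcm_dvd_iff {a b : ℕ} {n : ℤ} :
    ((a.lcm b : ℕ) : ℤ) ∣ n ↔ (a : ℤ) ∣ n ∧ (b : ℤ) ∣ n := by
  simp only [Int.natCast_dvd, Nat.lcm_dvd_iff]

namespace CongruenceSubgroup

theorem Gamma_le_Gamma1 (N : ℕ) : Gamma N ≤ Gamma1 N := fun γ hγ ↦ by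
  obtain ⟨h00, -, h10, h11⟩ := Gamma_mem.mp hγ
  exact (Gamma1_mem N γ).mpr ⟨h00, h11, h10⟩

theorem Gamma_le_map_conj_Gamma1 (N : ℕ) (g : SL(2, ℤ)) :
    Gamma N ≤ (Gamma1 N).map (MulAut.conj g).toMonoidHom := fun γ hγ ↦ by
  rw [Subgroup.mem_map_equiv, MulAut.conj_symm_apply]
  simpa using Gamma_le_Gamma1 N (Gamma_normal N |>.conj_mem γ hγ g⁻¹)

theorem T_zpow_mem_Gamma1 (N : ℕ) (n : ℤ) : T ^ n ∈ Gamma1 N := by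
  simp [coe_T_zpow]

end CongruenceSubgroup

namespace ModularGroup

theorem coe_conj_T_zpow (g : SL(2, ℤ)) (n : ℤ) :
    ((g * T ^ n * g⁻¹ : SL(2, ℤ)) : Matrix (Fin 2) (Fin 2) ℤ) =
      !![1 - g 0 0 * g 1 0 * n, g 0 0 ^ 2 * n; -(g 1 0 ^ 2 * n), 1 + g 0 0 * g 1 0 * n] := by
  have hdet : g 0 0 * g 1 1 - g 0 1 * g 1 0 = 1 := by
    rw [← Matrix.det_fin_two]; exact g.det_coe
  rw [Matrix.SpecialLinearGroup.coe_mul, Matrix.SpecialLinearGroup.coe_mul,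
    Matrix.SpecialLinearGroup.coe_inv, Matrix.adjugate_fin_two, coe_T_zpow]
  ext i j
  fin_cases i <;> fin_cases j <;>
    simp only [Fin.zero_eta, Fin.mk_one, Matrix.mul_apply, Fin.sum_univ_two, Matrix.of_apply,
      Matrix.cons_val', Matrix.cons_val_fin_one, Matrix.cons_val_zero, Matrix.cons_val_one]
  · linear_combination hdet
  · ring
  · ring
  · linear_combination hdet

theorem conj_T_zpow_mem_Gamma1_iff (N : ℕ) (g : SL(2, ℤ)) (n : ℤ) :
    g * T ^ n * g⁻¹ ∈ Gamma1 N ↔ (N : ℤ) ∣ g 0 0 * g 1 0 * n ∧ (N : ℤ) ∣ g 1 0 ^ 2 * n := by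
  simp only [Gamma1_mem, coe_conj_T_zpow]
  simp [← ZMod.intCast_zmod_eq_zero_iff_dvd]

end ModularGroup

/-- For `g = [[a,b],[c,d]] ∈ SL₂(ℤ)` and `N > 0`, an element `T^n·γ` with
`γ ∈ Γ(N)` lies in `Γ₁(N) ∩ g⁻¹Γ₁(N)g` if and only if `n_g ∣ n`, where
`n_g = lcm(N/gcd(N,ac), N/gcd(N,c²))`.  (Consequently
`(Γ₁(N) ∩ g⁻¹Γ₁(N)g)/Γ(N) = T^{n_g ℤ}·Γ(N)/Γ(N)`.) -/
theorem mem_gamma1_inter_conj_iff (N : ℕ) (hN : 0 < N)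
    (g : Matrix.SpecialLinearGroup (Fin 2) ℤ) (n : ℤ)
    (γ : Matrix.SpecialLinearGroup (Fin 2) ℤ) (hγ : γ ∈ Gamma N) :
    ModularGroup.T ^ n * γ ∈ Gamma1 N ⊓ (Gamma1 N).map (MulAut.conj g⁻¹).toMonoidHom ↔
      ((Nat.lcm (N / Int.gcd N (g 0 0 * g 1 0)) (N / Int.gcd N (g 1 0 ^ 2)) : ℤ) ∣ n) := by
  have hΓ : Gamma N ≤ Gamma1 N ⊓ (Gamma1 N).map (MulAut.conj g⁻¹).toMonoidHom :=
    le_inf (Gamma_le_Gamma1 N) (Gamma_le_map_conj_Gamma1 N g⁻¹)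
  rw [Subgroup.mul_mem_cancel_right _ (hΓ hγ), Subgroup.mem_inf,
    and_iff_right (T_zpow_mem_Gamma1 N n), Subgroup.mem_map_equiv, MulAut.conj_symm_apply,
    inv_inv, conj_T_zpow_mem_Gamma1_iff, Int.natCast_lcm_dvd_iff,
    Int.natCast_div_gcd_dvd_iff_dvd_mul hN, Int.natCast_div_gcd_dvd_iff_dvd_mul hN]
end

section
/- Let N₀ > 4 be a positive integer. Then the number of double cosets #(Γ₁(N₀)\SL₂(ℤ)/Γ_∞) equals (1/2)·Σ_{d | N₀} φ(d)·φ(N₀/d), where φ is Euler's totient function and Γ_∞ is the stabilizer of the cusp ∞ in SL₂(ℤ), i.e. the subgroup generated by T and -I. -/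
open CongruenceSubgroup

instance : Fact (Even (Fintype.card (Fin 2))) := ⟨by decide⟩

namespace DCHelper

open Matrix MatrixGroups ModularGroup CongruenceSubgroup

lemma eqvGen_invol {α : Type*} (σ : α → α) (hinv : ∀ a, σ (σ a) = a) {x y : α}
    (h : Relation.EqvGen (fun x y => y = σ x) x y) : y = x ∨ y = σ x := by
  induction h with
  | rel a b hab => exact Or.inr hab
  | refl a => exact Or.inl rfl
  | symm a b h ih =>
    rcases ih with rfl | rfl
    · exact Or.inl rfl
    · exact Or.inr (by rw [hinv])
  | trans a b c h1 h2 ih1 ih2 =>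
    rcases ih2 with rfl | rfl <;> rcases ih1 with rfl | rfl
    · exact Or.inl rfl
    · exact Or.inr rfl
    · exact Or.inr rfl
    · exact Or.inl (by rw [hinv])

lemma quot_invol_cases {α : Type*} (σ : α → α) (hinv : ∀ a, σ (σ a) = a) {x y : α}
    (h : Quot.mk (fun x y => y = σ x) x = Quot.mk (fun x y => y = σ x) y) :
    y = x ∨ y = σ x :=
  eqvGen_invol σ hinv (Quot.eq.mp h)

lemma card_quot_invol {α : Type*} (σ : α → α) (hinv : ∀ a, σ (σ a) = a)
    (hfree : ∀ a, σ a ≠ a) :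
    Nat.card α = 2 * Nat.card (Quot (fun x y => y = σ x)) := by
  classical
  set r := fun x y : α => y = σ x with hr
  have e : α ≃ Quot r × Bool := by
    refine ⟨fun a => (Quot.mk r a, if (Quot.mk r a).out = a then true else false),
      fun p => if p.2 then p.1.out else σ p.1.out, ?_, ?_⟩
    · intro a
      by_cases hc : (Quot.mk r a).out = a
      · simp [hc]
      · have h0 : Quot.mk r ((Quot.mk r a).out) = Quot.mk r a := Quot.out_eq _
        rcases quot_invol_cases σ hinv h0 with h1 | h1
        · exact absurd h1.symm hc
        · simp [hc, ← h1]
      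
    · rintro ⟨q, b⟩
      have h0 : Quot.mk r q.out = q := Quot.out_eq _
      cases b
      · have h2 : Quot.mk r (σ q.out) = q :=
          ((Quot.sound (show r q.out (σ q.out) from rfl)).symm).trans h0
        have h3 : ¬ ((Quot.mk r (σ q.out)).out = σ q.out) := by
          rw [h2]
          intro hcon
          exact hfree q.out (by rw [← hcon])
        refine Prod.ext ?_ ?_
        · simpa using h2
        · simp only [Bool.false_eq_true, if_false]
          rw [if_neg h3]
      · simp [h0]
  rw [Nat.card_congr e, Nat.card_prod, Nat.card_eq_fintype_card (α := Bool)]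
  simp [mul_comm]

end DCHelper

open DCHelper
open Matrix MatrixGroups ModularGroup


namespace DCH2

variable (N : ℕ) [NeZero N]

/-- bottom-left entry mod N -/
def bc (g : SL(2,ℤ)) : ZMod N := ((g 1 0 : ℤ) : ZMod N)
/-- bottom-right entry mod N -/
def bd (g : SL(2,ℤ)) : ZMod N := ((g 1 1 : ℤ) : ZMod N)

lemma row_coprime (g : SL(2,ℤ)) : IsCoprime (bc N g) (bd N g) := by
  refine ⟨-((g 0 1 : ℤ) : ZMod N), ((g 0 0 : ℤ) : ZMod N), ?_⟩
  have h1 : (g : Matrix (Fin 2) (Fin 2) ℤ).det = 1 := g.property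
  rw [Matrix.det_fin_two] at h1
  have h2 := congrArg (Int.cast : ℤ → ZMod N) h1
  push_cast at h2
  unfold bc bd
  linear_combination h2

lemma key0 {c d : ZMod N} (h : IsCoprime c d) {m : ℕ} (h1 : m ∣ c.val)
    (h2 : m ∣ d.val) (h3 : m ∣ N) : m = 1 := by
  obtain ⟨a, b, hab⟩ := h
  have hz : ((a.val * c.val + b.val * d.val - 1 : ℤ) : ZMod N) = 0 := by
    push_cast [ZMod.natCast_val, ZMod.cast_id]
    linear_combination hab
  have hdvd : (N : ℤ) ∣ (a.val * c.val + b.val * d.val - 1 : ℤ) :=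
    (ZMod.intCast_zmod_eq_zero_iff_dvd _ _).mp hz
  have hm1 : (m : ℤ) ∣ (a.val * c.val + b.val * d.val - 1 : ℤ) :=
    dvd_trans (Int.natCast_dvd_natCast.mpr h3) hdvd
  have hm2 : (m : ℤ) ∣ (a.val * c.val + b.val * d.val : ℤ) := by
    exact dvd_add (Dvd.dvd.mul_left (Int.natCast_dvd_natCast.mpr h1) _)
      (Dvd.dvd.mul_left (Int.natCast_dvd_natCast.mpr h2) _)
  have : (m : ℤ) ∣ 1 := by
    have := dvd_sub hm2 hm1
    simpa using this
  exact Nat.dvd_one.mp (Int.ofNat_dvd.mp (by simpa using this))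

lemma coprime_d {c d : ZMod N} (h : IsCoprime c d) :
    Nat.Coprime d.val (Nat.gcd c.val N) := by
  have h1 : Nat.gcd d.val (Nat.gcd c.val N) ∣ c.val :=
    (Nat.gcd_dvd_right _ _).trans (Nat.gcd_dvd_left _ _)
  have h2 : Nat.gcd d.val (Nat.gcd c.val N) ∣ d.val := Nat.gcd_dvd_left _ _
  have h3 : Nat.gcd d.val (Nat.gcd c.val N) ∣ N :=
    (Nat.gcd_dvd_right _ _).trans (Nat.gcd_dvd_right _ _)
  exact key0 N h h1 h2 h3

lemma gcd_pos (c : ZMod N) : 0 < Nat.gcd c.val N :=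
  Nat.gcd_pos_of_pos_right _ (Nat.pos_of_ne_zero (NeZero.ne N))

lemma coprime_c (c : ZMod N) :
    Nat.Coprime (c.val / Nat.gcd c.val N) (N / Nat.gcd c.val N) :=
  Nat.coprime_div_gcd_div_gcd (gcd_pos N c)

/-- the classifying sigma type -/
abbrev A := Σ e : N.divisors, (ZMod (e : ℕ))ˣ × (ZMod (N / (e : ℕ)))ˣ

/-- the negation involution -/
def sig : A N → A N := fun x => ⟨x.1, (-x.2.1, -x.2.2)⟩

lemma sig_invol (x : A N) : sig N (sig N x) = x := by
  cases x with
  | mk i p => exact Sigma.ext rfl (heq_of_eq (Prod.ext (neg_neg _) (neg_neg _)))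

def chi (c d : ZMod N) (h : IsCoprime c d) : A N :=
  ⟨⟨Nat.gcd c.val N, Nat.mem_divisors.mpr ⟨Nat.gcd_dvd_right _ _, NeZero.ne N⟩⟩,
   (ZMod.unitOfCoprime d.val (coprime_d N h),
    ZMod.unitOfCoprime (c.val / Nat.gcd c.val N) (coprime_c N c))⟩

end DCH2

namespace DCH2
variable (N : ℕ) [NeZero N]
set_option linter.unusedSectionVars false

lemma nez_e {e : ℕ} (he : e ∈ N.divisors) : NeZero e :=
  ⟨(Nat.pos_of_mem_divisors he).ne'⟩

lemma nez_ne {e : ℕ} (he : e ∈ N.divisors) : NeZero (N / e) :=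
  ⟨(Nat.div_pos (Nat.le_of_dvd (Nat.pos_of_ne_zero (NeZero.ne N)) (Nat.mem_divisors.mp he).1)
      (Nat.pos_of_mem_divisors he)).ne'⟩

lemma A_ext {e e' : ℕ} (he : e ∈ N.divisors) (he' : e' ∈ N.divisors)
    (u : (ZMod e)ˣ) (v : (ZMod (N / e))ˣ) (u' : (ZMod e')ˣ) (v' : (ZMod (N / e'))ˣ)
    (h1 : e = e') (h2 : ((u : ZMod e)).val = ((u' : ZMod e')).val)
    (h3 : ((v : ZMod (N / e))).val = ((v' : ZMod (N / e'))).val) :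
    (⟨⟨e, he⟩, (u, v)⟩ : A N) = ⟨⟨e', he'⟩, (u', v')⟩ := by
  subst h1
  haveI := nez_e N he
  haveI := nez_ne N he
  have hu : u = u' := Units.ext (ZMod.val_injective _ h2)
  have hv : v = v' := Units.ext (ZMod.val_injective _ h3)
  subst hu; subst hv; rfl

lemma valcast (e : ℕ) (he : e ∣ N) (x : ZMod N) :
    ((x.val : ℕ) : ZMod e) = ZMod.castHom he (ZMod e) x := by
  rw [ZMod.natCast_val, ZMod.castHom_apply]

lemma chi_T (c d : ZMod N) (h : IsCoprime c d) (h' : IsCoprime c (c + d)) :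
    chi N c (c + d) h' = chi N c d h := by
  apply A_ext N _ _ _ _ _ _ rfl
  · rw [ZMod.coe_unitOfCoprime, ZMod.coe_unitOfCoprime]
    apply congrArg ZMod.val
    rw [valcast N _ (Nat.gcd_dvd_right c.val N), valcast N _ (Nat.gcd_dvd_right c.val N),
      map_add]
    have hc0 : ZMod.castHom (Nat.gcd_dvd_right c.val N) (ZMod (Nat.gcd c.val N)) c = 0 := by
      rw [← valcast N _ (Nat.gcd_dvd_right c.val N)]
      exact (ZMod.natCast_eq_zero_iff _ _).mpr (Nat.gcd_dvd_left _ _)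
    rw [hc0, zero_add]
  · rfl

lemma gcd_neg_val (c : ZMod N) : Nat.gcd (-c).val N = Nat.gcd c.val N := by
  by_cases hc : c = 0
  · simp [hc]
  · rw [ZMod.neg_val, if_neg hc]
    have hle : c.val ≤ N := (ZMod.val_lt c).le
    apply Nat.dvd_antisymm
    · apply Nat.dvd_gcd
      · have := Nat.dvd_sub (Nat.gcd_dvd_right (N - c.val) N) (Nat.gcd_dvd_left (N - c.val) N)
        rwa [Nat.sub_sub_self hle] at this
      · exact Nat.gcd_dvd_right _ _
    · apply Nat.dvd_gcd
      · exact Nat.dvd_sub (Nat.gcd_dvd_right c.val N) (Nat.gcd_dvd_left c.val N)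
      · exact Nat.gcd_dvd_right _ _

lemma neg_div_part (c : ZMod N) :
    (((-c).val / Nat.gcd c.val N : ℕ) : ZMod (N / Nat.gcd c.val N)) =
      -((c.val / Nat.gcd c.val N : ℕ) : ZMod (N / Nat.gcd c.val N)) := by
  set e := Nat.gcd c.val N with hE
  by_cases hc : c = 0
  · simp [hc]
  · rw [ZMod.neg_val, if_neg hc]
    have hd1 : e ∣ c.val := Nat.gcd_dvd_left _ _
    have hd2 : e ∣ N := Nat.gcd_dvd_right _ _
    have he : 0 < e := gcd_pos N c
    obtain ⟨a, ha⟩ := hd1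
    obtain ⟨b, hb⟩ := hd2
    have hab : a ≤ b := by
      have : e * a ≤ e * b := by rw [← ha, ← hb]; exact (ZMod.val_lt c).le
      exact Nat.le_of_mul_le_mul_left this he
    have h1 : (N - c.val) / e = b - a := by
      rw [ha, hb, ← Nat.mul_sub]
      exact Nat.mul_div_cancel_left _ he
    have h2 : c.val / e = a := by rw [ha]; exact Nat.mul_div_cancel_left _ he
    have h3 : (N : ℕ) / e = b := by rw [hb]; exact Nat.mul_div_cancel_left _ he
    rw [h1, h2, Nat.cast_sub hab]
    rw [show ((b : ℕ) : ZMod (N / e)) = 0 from by rw [← h3, ZMod.natCast_self]]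
    ring

end DCH2

namespace DCH2
variable (N : ℕ) [NeZero N]
set_option linter.unusedSectionVars false

lemma chi_neg (c d : ZMod N) (h : IsCoprime c d) (h' : IsCoprime (-c) (-d)) :
    chi N (-c) (-d) h' = sig N (chi N c d h) := by
  apply A_ext N _ _ _ _ _ _ (gcd_neg_val N c)
  · simp only [chi, sig, ZMod.coe_unitOfCoprime, Units.val_neg]
    rw [gcd_neg_val N c]
    apply congrArg ZMod.val
    rw [valcast N _ (Nat.gcd_dvd_right c.val N)]
    erw [Units.val_neg, ZMod.coe_unitOfCoprime, valcast N _ (Nat.gcd_dvd_right c.val N), map_neg]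
    rfl
  · simp only [chi, sig, ZMod.coe_unitOfCoprime, Units.val_neg]
    rw [gcd_neg_val N c]
    exact congrArg ZMod.val (neg_div_part N c)

lemma chi_inj {c₁ d₁ c₂ d₂ : ZMod N} {h₁ : IsCoprime c₁ d₁} {h₂ : IsCoprime c₂ d₂}
    (heq : chi N c₁ d₁ h₁ = chi N c₂ d₂ h₂) :
    c₁ = c₂ ∧ ∃ t : ZMod N, d₂ = d₁ + t * c₁ := by
  have he : Nat.gcd c₁.val N = Nat.gcd c₂.val N := by
    have := congrArg (fun x : A N => (x.1 : ℕ)) heq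
    simpa [chi] using this
  set e := Nat.gcd c₁.val N with hE
  haveI : NeZero e := ⟨(gcd_pos N c₁).ne'⟩
  have hu : ((d₁.val : ℕ) : ZMod e).val = ((d₂.val : ℕ) : ZMod (Nat.gcd c₂.val N)).val := by
    have := congrArg (fun x : A N => ((x.2.1 : ZMod (x.1 : ℕ))).val) heq
    simpa [chi, ZMod.coe_unitOfCoprime] using this
  rw [← he] at hu
  have hu' : ((d₁.val : ℕ) : ZMod e) = ((d₂.val : ℕ) : ZMod e) :=
    ZMod.val_injective _ hu
  have hv : ((c₁.val / e : ℕ) : ZMod (N / e)).val =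
      ((c₂.val / Nat.gcd c₂.val N : ℕ) : ZMod (N / Nat.gcd c₂.val N)).val := by
    have := congrArg (fun x : A N => ((x.2.2 : ZMod (N / (x.1 : ℕ)))).val) heq
    simpa [chi, ZMod.coe_unitOfCoprime] using this
  rw [← he] at hv
  have hdvdN : e ∣ N := Nat.gcd_dvd_right _ _
  -- c₁ = c₂
  have hlt₁ : c₁.val / e < N / e :=
    Nat.div_lt_div_of_lt_of_dvd hdvdN (ZMod.val_lt c₁)
  have hlt₂ : c₂.val / e < N / e :=
    Nat.div_lt_div_of_lt_of_dvd hdvdN (ZMod.val_lt c₂)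
  rw [ZMod.val_cast_of_lt hlt₁, ZMod.val_cast_of_lt hlt₂] at hv
  have hc1 : c₁.val = c₂.val := by
    have k1 : e * (c₁.val / e) = c₁.val := Nat.mul_div_cancel' (Nat.gcd_dvd_left _ _)
    have k2 : e * (c₂.val / e) = c₂.val := by
      rw [he]; exact Nat.mul_div_cancel' (Nat.gcd_dvd_left _ _)
    rw [← k1, ← k2, hv]
  have hc : c₁ = c₂ := ZMod.val_injective _ hc1
  refine ⟨hc, ?_⟩
  -- translation part
  have hch : ZMod.castHom hdvdN (ZMod e) (d₂ - d₁) = 0 := by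
    rw [map_sub, ← valcast N _ hdvdN, ← valcast N _ hdvdN, hu', sub_self]
  have hdvd : e ∣ (d₂ - d₁).val := by
    have := hch
    rw [← valcast N _ hdvdN] at this
    exact (ZMod.natCast_eq_zero_iff _ _).mp this
  obtain ⟨k, hk⟩ := hdvd
  have hbez := Nat.gcd_eq_gcd_ab c₁.val N
  have heB : (e : ZMod N) = c₁ * ((Nat.gcdA c₁.val N : ℤ) : ZMod N) := by
    have := congrArg (Int.cast : ℤ → ZMod N) hbez
    push_cast [ZMod.natCast_val, ZMod.cast_id] at this
    simpa using this
  have hd21 : d₂ - d₁ = (e : ZMod N) * (k : ZMod N) := by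
    have : ((d₂ - d₁).val : ZMod N) = d₂ - d₁ := by
      rw [ZMod.natCast_val, ZMod.cast_id]
    rw [← this, hk]
    push_cast
    ring
  refine ⟨((Nat.gcdA c₁.val N : ℤ) : ZMod N) * (k : ZMod N), ?_⟩
  have : d₂ - d₁ = ((Nat.gcdA c₁.val N : ℤ) : ZMod N) * (k : ZMod N) * c₁ := by
    rw [hd21, heB]; ring
  linear_combination this

lemma isCoprime_of_gcd (c d : ZMod N) (h : Nat.Coprime d.val (Nat.gcd c.val N)) :
    IsCoprime c d := by
  have hb1 := Nat.gcd_eq_gcd_ab d.val (Nat.gcd c.val N)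
  rw [h] at hb1
  have hb2 := Nat.gcd_eq_gcd_ab c.val N
  have hb1' := congrArg (Int.cast : ℤ → ZMod N) hb1
  have hb2' := congrArg (Int.cast : ℤ → ZMod N) hb2
  push_cast [ZMod.natCast_val, ZMod.cast_id] at hb1' hb2'
  refine ⟨((Nat.gcdA c.val N : ℤ) : ZMod N) * ((Nat.gcdB d.val (Nat.gcd c.val N) : ℤ) : ZMod N),
    ((Nat.gcdA d.val (Nat.gcd c.val N) : ℤ) : ZMod N), ?_⟩
  have hN0 : ((N : ℕ) : ZMod N) = 0 := ZMod.natCast_self N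
  rw [hN0] at hb2'
  simp only [zero_mul, add_zero] at hb2'
  calc ((Nat.gcdA c.val N : ℤ) : ZMod N) * ((Nat.gcdB d.val (Nat.gcd c.val N) : ℤ) : ZMod N) * c
        + ((Nat.gcdA d.val (Nat.gcd c.val N) : ℤ) : ZMod N) * d
      = d * ((Nat.gcdA d.val (Nat.gcd c.val N) : ℤ) : ZMod N)
        + (c * ((Nat.gcdA c.val N : ℤ) : ZMod N)) * ((Nat.gcdB d.val (Nat.gcd c.val N) : ℤ) : ZMod N) := by ring
    _ = 1 := by rw [← hb2']; exact hb1'.symm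

end DCH2

namespace DCH2
variable (N : ℕ) [NeZero N]
set_option linter.unusedSectionVars false

lemma chi_surj (a : A N) : ∃ (c d : ZMod N) (h : IsCoprime c d), chi N c d h = a := by
  obtain ⟨⟨e, he⟩, u, v⟩ := a
  haveI := nez_e N he
  haveI := nez_ne N he
  have heN : (e : ℕ) ∣ N := (Nat.mem_divisors.mp he).1
  have hepos : 0 < e := Nat.pos_of_mem_divisors he
  obtain ⟨b, hb⟩ := heN
  have hbeq : N / e = b := by rw [hb]; exact Nat.mul_div_cancel_left _ hepos
  set v' := ((v : ZMod (N / e))).val with hv'def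
  set u' := ((u : ZMod e)).val with hu'def
  have hv'cop : Nat.Coprime v' (N / e) := ZMod.val_coe_unit_coprime v
  have hu'cop : Nat.Coprime u' e := ZMod.val_coe_unit_coprime u
  have hv'lt : v' < N / e := ZMod.val_lt _
  have hu'lt : u' < e := ZMod.val_lt _
  set c : ZMod N := ((e * v' : ℕ) : ZMod N) with hcdef
  set d : ZMod N := ((u' : ℕ) : ZMod N) with hddef
  have hcval : c.val = e * v' := by
    rw [hcdef, ZMod.val_natCast, hb, Nat.mul_mod_mul_left, Nat.mod_eq_of_lt (hbeq ▸ hv'lt)]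
  have hdval : d.val = u' := by
    rw [hddef, ZMod.val_natCast, Nat.mod_eq_of_lt (lt_of_lt_of_le hu'lt
      (Nat.le_of_dvd (Nat.pos_of_ne_zero (NeZero.ne N)) ⟨b, hb⟩))]
  have hgcd : Nat.gcd c.val N = e := by
    rw [hcval, hb, Nat.gcd_mul_left, Nat.Coprime.gcd_eq_one (hbeq ▸ hv'cop), mul_one]
  have hcop : IsCoprime c d := by
    apply isCoprime_of_gcd
    rw [hgcd, hdval]
    exact hu'cop
  refine ⟨c, d, hcop, ?_⟩
  apply A_ext N _ _ _ _ _ _ hgcd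
  · simp only [chi, ZMod.coe_unitOfCoprime]
    rw [hgcd, hdval]
    apply congrArg ZMod.val
    rw [hu'def, ZMod.natCast_val, ZMod.cast_id]
  · simp only [chi, ZMod.coe_unitOfCoprime]
    rw [hgcd, hcval, Nat.mul_div_cancel_left _ hepos]
    apply congrArg ZMod.val
    rw [hv'def, ZMod.natCast_val, ZMod.cast_id]

end DCH2

namespace DCH2
open Matrix MatrixGroups ModularGroup CongruenceSubgroup
variable (N : ℕ) [NeZero N]
set_option linter.unusedSectionVars false

lemma lift_coprime (a b n : ℕ) (ha : 0 < a) (h : Nat.gcd (Nat.gcd a n) b = 1) :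
    ∃ k : ℕ, Nat.Coprime a (b + k * n) := by
  classical
  set ps := a.primeFactors.filter (fun p => ¬ p ∣ b) with hps
  refine ⟨ps.prod id, ?_⟩
  apply Nat.coprime_of_dvd
  intro p pp hpa hpbkn
  by_cases hpb : p ∣ b
  · have hpk : ¬ p ∣ ps.prod id := by
      intro hdvd
      obtain ⟨q, hq, hq'⟩ := (pp.prime.dvd_finset_prod_iff id).mp hdvd
      rw [hps, Finset.mem_filter] at hq
      have hpq : p = q :=
        (Nat.prime_dvd_prime_iff_eq pp (Nat.prime_of_mem_primeFactors hq.1)).mp hq'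
      exact hq.2 (hpq ▸ hpb)
    have hpn : ¬ p ∣ n := by
      intro hpn
      have h1 : p ∣ Nat.gcd (Nat.gcd a n) b := Nat.dvd_gcd (Nat.dvd_gcd hpa hpn) hpb
      rw [h] at h1
      exact pp.one_lt.ne' (Nat.dvd_one.mp h1)
    have h2 : p ∣ ps.prod id * n := (Nat.dvd_add_right hpb).mp hpbkn
    rcases pp.dvd_mul.mp h2 with h3 | h3
    exacts [hpk h3, hpn h3]
  · have hpmem : p ∈ ps := by
      rw [hps, Finset.mem_filter]
      exact ⟨Nat.mem_primeFactors.mpr ⟨pp, hpa, ha.ne'⟩, hpb⟩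
    have hpk : p ∣ ps.prod id * n := (Finset.dvd_prod_of_mem id hpmem).mul_right n
    have hb' : p ∣ b := by
      have := Nat.dvd_sub hpbkn hpk
      rwa [Nat.add_sub_cancel] at this
    exact hpb hb'

lemma exists_row_lift (c d : ZMod N) (h : IsCoprime c d) :
    ∃ g : SL(2,ℤ), bc N g = c ∧ bd N g = d := by
  have hNpos : 0 < N := Nat.pos_of_ne_zero (NeZero.ne N)
  set a := c.val + N with hadef
  have ha : 0 < a := Nat.lt_of_lt_of_le hNpos (Nat.le_add_left _ _)
  have hgdvd : Nat.gcd a N ∣ c.val := by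
    have h1 := Nat.dvd_sub (Nat.gcd_dvd_left a N) (Nat.gcd_dvd_right a N)
    rwa [hadef, Nat.add_sub_cancel] at h1
  have hg1 : Nat.gcd (Nat.gcd a N) d.val = 1 := by
    apply key0 N h (m := Nat.gcd (Nat.gcd a N) d.val)
    · exact (Nat.gcd_dvd_left _ _).trans hgdvd
    · exact Nat.gcd_dvd_right _ _
    · exact (Nat.gcd_dvd_left _ _).trans (Nat.gcd_dvd_right _ _)
  obtain ⟨k, hk⟩ := lift_coprime a d.val N ha hg1
  have hcop : IsCoprime (a : ℤ) ((d.val + k * N : ℕ) : ℤ) :=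
    Nat.isCoprime_iff_coprime.mpr hk
  obtain ⟨g, hg0, hg1'⟩ := hcop.exists_SL2_row 1
  refine ⟨g, ?_, ?_⟩
  · show ((g 1 0 : ℤ) : ZMod N) = c
    rw [show (g 1 0 : ℤ) = (a : ℤ) from hg0]
    push_cast [hadef, ZMod.natCast_val, ZMod.cast_id, ZMod.natCast_self]
    simp
  · show ((g 1 1 : ℤ) : ZMod N) = d
    rw [show (g 1 1 : ℤ) = ((d.val + k * N : ℕ) : ℤ) from hg1']
    push_cast [ZMod.natCast_val, ZMod.cast_id, ZMod.natCast_self]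
    simp

lemma bc_mul (g k : SL(2,ℤ)) :
    bc N (g * k) = bc N g * ((k 0 0 : ℤ) : ZMod N) + bd N g * ((k 1 0 : ℤ) : ZMod N) := by
  unfold bc bd
  have h := (Matrix.two_mul_expl (g : Matrix (Fin 2) (Fin 2) ℤ) (k : Matrix (Fin 2) (Fin 2) ℤ)).2.2.1
  have h2 : ((g * k : SL(2,ℤ)) 1 0 : ℤ) = (g 1 0) * (k 0 0) + (g 1 1) * (k 1 0) := h
  rw [h2]
  push_cast
  ring

lemma bd_mul (g k : SL(2,ℤ)) :
    bd N (g * k) = bc N g * ((k 0 1 : ℤ) : ZMod N) + bd N g * ((k 1 1 : ℤ) : ZMod N) := by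
  unfold bc bd
  have h := (Matrix.two_mul_expl (g : Matrix (Fin 2) (Fin 2) ℤ) (k : Matrix (Fin 2) (Fin 2) ℤ)).2.2.2
  have h2 : ((g * k : SL(2,ℤ)) 1 1 : ℤ) = (g 1 0) * (k 0 1) + (g 1 1) * (k 1 1) := h
  rw [h2]
  push_cast
  ring

lemma bc_gamma1 (h g : SL(2,ℤ)) (hh : h ∈ Gamma1 N) : bc N (h * g) = bc N g := by
  rw [Gamma1_mem] at hh
  unfold bc
  have heq : ((h * g : SL(2,ℤ)) 1 0 : ℤ) = (h 1 0) * (g 0 0) + (h 1 1) * (g 1 0) :=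
    (Matrix.two_mul_expl (h : Matrix (Fin 2) (Fin 2) ℤ) (g : Matrix (Fin 2) (Fin 2) ℤ)).2.2.1
  rw [heq]
  push_cast
  rw [hh.2.1, hh.2.2]
  ring

lemma bd_gamma1 (h g : SL(2,ℤ)) (hh : h ∈ Gamma1 N) : bd N (h * g) = bd N g := by
  rw [Gamma1_mem] at hh
  unfold bd
  have heq : ((h * g : SL(2,ℤ)) 1 1 : ℤ) = (h 1 0) * (g 0 1) + (h 1 1) * (g 1 1) :=
    (Matrix.two_mul_expl (h : Matrix (Fin 2) (Fin 2) ℤ) (g : Matrix (Fin 2) (Fin 2) ℤ)).2.2.2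
  rw [heq]
  push_cast
  rw [hh.2.1, hh.2.2]
  ring

lemma mem_gamma1_of_row (g M : SL(2,ℤ)) (hc : bc N g = bc N M) (hd : bd N g = bd N M) :
    g * M⁻¹ ∈ Gamma1 N := by
  rw [Matrix.SpecialLinearGroup.SL2_inv_expl M]
  rw [Gamma1_mem]
  have hdetg : ((g 0 0 : ℤ) : ZMod N) * ((g 1 1 : ℤ) : ZMod N)
      - ((g 0 1 : ℤ) : ZMod N) * ((g 1 0 : ℤ) : ZMod N) = 1 := by
    have h1 : (g : Matrix (Fin 2) (Fin 2) ℤ).det = 1 := g.property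
    rw [Matrix.det_fin_two] at h1
    have h2 := congrArg (Int.cast : ℤ → ZMod N) h1
    push_cast at h2
    linear_combination h2
  have hdetM : ((M 0 0 : ℤ) : ZMod N) * ((M 1 1 : ℤ) : ZMod N)
      - ((M 0 1 : ℤ) : ZMod N) * ((M 1 0 : ℤ) : ZMod N) = 1 := by
    have h1 : (M : Matrix (Fin 2) (Fin 2) ℤ).det = 1 := M.property
    rw [Matrix.det_fin_two] at h1
    have h2 := congrArg (Int.cast : ℤ → ZMod N) h1
    push_cast at h2
    linear_combination h2
  unfold bc at hc
  unfold bd at hd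
  set Minv : SL(2,ℤ) := (⟨![![M 1 1, -(M 0 1)], ![-(M 1 0), M 0 0]], _⟩ : SL(2,ℤ))
  have e00 : ((g * Minv : SL(2,ℤ)) 0 0 : ℤ) = (g 0 0) * (M 1 1) + (g 0 1) * (-(M 1 0)) := by
    have := (Matrix.two_mul_expl (g : Matrix (Fin 2) (Fin 2) ℤ)
      (Minv : Matrix (Fin 2) (Fin 2) ℤ)).1
    exact this
  have e11 : ((g * Minv : SL(2,ℤ)) 1 1 : ℤ) = (g 1 0) * (-(M 0 1)) + (g 1 1) * (M 0 0) := by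
    have := (Matrix.two_mul_expl (g : Matrix (Fin 2) (Fin 2) ℤ)
      (Minv : Matrix (Fin 2) (Fin 2) ℤ)).2.2.2
    exact this
  have e10 : ((g * Minv : SL(2,ℤ)) 1 0 : ℤ) = (g 1 0) * (M 1 1) + (g 1 1) * (-(M 1 0)) := by
    have := (Matrix.two_mul_expl (g : Matrix (Fin 2) (Fin 2) ℤ)
      (Minv : Matrix (Fin 2) (Fin 2) ℤ)).2.2.1
    exact this
  refine ⟨?_, ?_, ?_⟩
  · rw [e00]; push_cast; rw [← hc, ← hd]; linear_combination hdetg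
  · rw [e11]; push_cast; linear_combination hdetM - (M 0 1 : ZMod N) * hc + (M 0 0 : ZMod N) * hd
  · rw [e10]; push_cast; linear_combination (M 1 1 : ZMod N) * hc - (M 1 0 : ZMod N) * hd

end DCH2

namespace DCH2
open Matrix MatrixGroups ModularGroup CongruenceSubgroup
variable (N : ℕ) [NeZero N]
set_option linter.unusedSectionVars false

def F (g : SL(2,ℤ)) : A N := chi N (bc N g) (bd N g) (row_coprime N g)

lemma chi_congr {c₁ d₁ c₂ d₂ : ZMod N} {h₁ : IsCoprime c₁ d₁} {h₂ : IsCoprime c₂ d₂}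
    (hc : c₁ = c₂) (hd : d₁ = d₂) : chi N c₁ d₁ h₁ = chi N c₂ d₂ h₂ := by
  subst hc; subst hd; rfl

lemma F_gamma1 (h g : SL(2,ℤ)) (hh : h ∈ Gamma1 N) : F N (h * g) = F N g :=
  chi_congr N (bc_gamma1 N h g hh) (bd_gamma1 N h g hh)

lemma T_entries : ((ModularGroup.T 0 0 : ℤ) = 1) ∧ ((ModularGroup.T 0 1 : ℤ) = 1)
    ∧ ((ModularGroup.T 1 0 : ℤ) = 0) ∧ ((ModularGroup.T 1 1 : ℤ) = 1) := by
  refine ⟨?_, ?_, ?_, ?_⟩ <;> simp [ModularGroup.coe_T]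

lemma neg_one_entries : (((-1 : SL(2,ℤ)) 0 0 : ℤ) = -1) ∧ (((-1 : SL(2,ℤ)) 0 1 : ℤ) = 0)
    ∧ (((-1 : SL(2,ℤ)) 1 0 : ℤ) = 0) ∧ (((-1 : SL(2,ℤ)) 1 1 : ℤ) = -1) := by
  refine ⟨?_, ?_, ?_, ?_⟩ <;> simp [Matrix.SpecialLinearGroup.coe_neg, Matrix.one_apply]

lemma F_T (g : SL(2,ℤ)) : F N (g * ModularGroup.T) = F N g := by
  have h1 : bc N (g * ModularGroup.T) = bc N g := by
    rw [bc_mul, T_entries.1, T_entries.2.2.1]; push_cast; ring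
  have h2 : bd N (g * ModularGroup.T) = bc N g + bd N g := by
    rw [bd_mul, T_entries.2.1, T_entries.2.2.2]; push_cast; ring
  calc F N (g * ModularGroup.T)
      = chi N (bc N g) (bc N g + bd N g) (by rw [← h2, ← h1]; exact row_coprime N _) :=
        chi_congr N h1 h2
    _ = chi N (bc N g) (bd N g) (row_coprime N g) := chi_T N _ _ _ _
    _ = F N g := rfl

lemma F_neg (g : SL(2,ℤ)) : F N (g * (-1)) = sig N (F N g) := by
  have h1 : bc N (g * (-1)) = -(bc N g) := by
    rw [bc_mul, neg_one_entries.1, neg_one_entries.2.2.1]; push_cast; ring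
  have h2 : bd N (g * (-1)) = -(bd N g) := by
    rw [bd_mul, neg_one_entries.2.1, neg_one_entries.2.2.2]; push_cast; ring
  calc F N (g * (-1))
      = chi N (-(bc N g)) (-(bd N g)) (by rw [← h2, ← h1]; exact row_coprime N _) :=
        chi_congr N h1 h2
    _ = sig N (F N g) := chi_neg N _ _ _ _

lemma bc_T_zpow (g : SL(2,ℤ)) (m : ℤ) : bc N (g * ModularGroup.T ^ m) = bc N g := by
  have e1 : ((ModularGroup.T ^ m) 0 0 : ℤ) = 1 := by rw [ModularGroup.coe_T_zpow]; simp
  have e2 : ((ModularGroup.T ^ m) 1 0 : ℤ) = 0 := by rw [ModularGroup.coe_T_zpow]; simp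
  rw [bc_mul, e1, e2]; push_cast; ring

lemma bd_T_zpow (g : SL(2,ℤ)) (m : ℤ) :
    bd N (g * ModularGroup.T ^ m) = bc N g * ((m : ℤ) : ZMod N) + bd N g := by
  have e1 : ((ModularGroup.T ^ m) 0 1 : ℤ) = m := by rw [ModularGroup.coe_T_zpow]; simp
  have e2 : ((ModularGroup.T ^ m) 1 1 : ℤ) = 1 := by rw [ModularGroup.coe_T_zpow]; simp
  rw [bd_mul, e1, e2]; push_cast; ring

lemma hTK : ModularGroup.T ∈ Subgroup.closure ({ModularGroup.T, -1} : Set SL(2,ℤ)) :=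
  Subgroup.subset_closure (by simp)

lemma hneg1K : (-1 : SL(2,ℤ)) ∈ Subgroup.closure ({ModularGroup.T, -1} : Set SL(2,ℤ)) :=
  Subgroup.subset_closure (by simp)

def Fhat (g : SL(2,ℤ)) : Quot (fun x y : A N => y = sig N x) := Quot.mk _ (F N g)

lemma Fhat_K (k : SL(2,ℤ)) (hk : k ∈ Subgroup.closure ({ModularGroup.T, -1} : Set SL(2,ℤ))) :
    ∀ g, Fhat N (g * k) = Fhat N g := by
  induction hk using Subgroup.closure_induction with
  | mem x hx =>
    rcases hx with rfl | rfl
    · intro g; exact congrArg (Quot.mk _) (F_T N g)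
    · intro g
      have h1 : Quot.mk (fun x y : A N => y = sig N x) (F N (g * (-1)))
          = Quot.mk _ (sig N (F N g)) := congrArg (Quot.mk _) (F_neg N g)
      have h2 : Quot.mk (fun x y : A N => y = sig N x) (F N g)
          = Quot.mk _ (sig N (F N g)) := Quot.sound rfl
      exact h1.trans h2.symm
  | one => intro g; rw [mul_one]
  | mul x y _ _ ihx ihy => intro g; rw [← mul_assoc, ihy (g * x), ihx g]
  | inv x _ ihx =>
    intro g
    have := ihx (g * x⁻¹)
    rw [mul_assoc, inv_mul_cancel, mul_one] at this
    exact this.symm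

lemma Fhat_gamma1 (h g : SL(2,ℤ)) (hh : h ∈ Gamma1 N) : Fhat N (h * g) = Fhat N g :=
  congrArg (Quot.mk _) (F_gamma1 N h g hh)

def Fbar : DoubleCoset.Quotient (↑(Gamma1 N) : Set SL(2,ℤ))
    (↑(Subgroup.closure {ModularGroup.T, -1}) : Set SL(2,ℤ)) →
    Quot (fun x y : A N => y = sig N x) := fun q =>
  Quotient.liftOn q (Fhat N) (by
    intro a b hab
    obtain ⟨h, hh, k, hk, rfl⟩ := (DoubleCoset.rel_iff (H := Gamma1 N)
      (K := Subgroup.closure {ModularGroup.T, -1})).mp hab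
    rw [mul_assoc, Fhat_gamma1 N h (a * k) hh, Fhat_K N k hk a])

lemma doset_eq_of_F_eq {g₁ g₂ : SL(2,ℤ)} (hF : F N g₁ = F N g₂) :
    DoubleCoset.mk (Gamma1 N) (Subgroup.closure {ModularGroup.T, -1}) g₁ =
      DoubleCoset.mk (Gamma1 N) (Subgroup.closure {ModularGroup.T, -1}) g₂ := by
  obtain ⟨hc, t, hd⟩ := chi_inj N hF
  set m : ℤ := (t.val : ℤ) with hmdef
  have hm : ((m : ℤ) : ZMod N) = t := by
    rw [hmdef]; push_cast [ZMod.natCast_val, ZMod.cast_id]; rfl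
  set M := g₁ * ModularGroup.T ^ m with hMdef
  have hbcM : bc N M = bc N g₂ := by rw [hMdef, bc_T_zpow]; exact hc
  have hbdM : bd N M = bd N g₂ := by
    rw [hMdef, bd_T_zpow, hm, hd, hc]; ring
  have hmem := mem_gamma1_of_row N g₂ M hbcM.symm hbdM.symm
  rw [DoubleCoset.eq]
  refine ⟨g₂ * M⁻¹, hmem, ModularGroup.T ^ m, Subgroup.zpow_mem _ (hTK) m, ?_⟩
  rw [hMdef]
  group

lemma Fbar_injective : Function.Injective (Fbar N) := by
  intro q₁ q₂
  induction q₁ using Quotient.inductionOn with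
  | h g₁ =>
  induction q₂ using Quotient.inductionOn with
  | h g₂ =>
  intro hF
  have hF' : Quot.mk (fun x y : A N => y = sig N x) (F N g₁)
      = Quot.mk (fun x y : A N => y = sig N x) (F N g₂) := hF
  rcases quot_invol_cases (sig N) (sig_invol N) hF' with h1 | h1
  · exact doset_eq_of_F_eq N h1.symm
  · have h2 : F N (g₁ * (-1)) = F N g₂ := by rw [F_neg N g₁]; exact h1.symm
    have h3 := doset_eq_of_F_eq N h2
    have h4 : DoubleCoset.mk (Gamma1 N) (Subgroup.closure {ModularGroup.T, -1}) g₁ =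
        DoubleCoset.mk (Gamma1 N) (Subgroup.closure {ModularGroup.T, -1}) (g₁ * (-1)) := by
      rw [DoubleCoset.eq]
      exact ⟨1, one_mem _, -1, hneg1K, by group⟩
    exact h4.trans h3


end DCH2
namespace DCH2
open Matrix MatrixGroups ModularGroup CongruenceSubgroup
variable (N : ℕ) [NeZero N]
set_option linter.unusedSectionVars false

lemma Fbar_surjective : Function.Surjective (Fbar N) := by
  intro y
  induction y using Quot.inductionOn with
  | h a =>
    obtain ⟨c, d, hcd, hchi⟩ := chi_surj N a
    obtain ⟨g, hg1, hg2⟩ := exists_row_lift N c d hcd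
    refine ⟨Quotient.mk'' g, ?_⟩
    show Quot.mk _ (F N g) = Quot.mk _ a
    apply congrArg
    calc F N g = chi N c d hcd := chi_congr N hg1 hg2
      _ = a := hchi

lemma sig_free (hN : 4 < N) : ∀ a : A N, sig N a ≠ a := by
  rintro ⟨⟨e, he⟩, u, v⟩ hcon
  haveI := nez_e N he
  haveI := nez_ne N he
  have heN : (e : ℕ) ∣ N := (Nat.mem_divisors.mp he).1
  have hu := congrArg (fun x : A N => ((x.2.1 : ZMod (x.1 : ℕ))).val) hcon
  have hv := congrArg (fun x : A N => ((x.2.2 : ZMod (N / (x.1 : ℕ)))).val) hcon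
  simp only [sig, Units.val_neg] at hu hv
  have hu' : -(u : ZMod e) = (u : ZMod e) := ZMod.val_injective _ hu
  have hv' : -(v : ZMod (N/e)) = (v : ZMod (N/e)) := ZMod.val_injective _ hv
  have h2u : (2 : ZMod e) * (u : ZMod e) = 0 := by linear_combination -hu'
  have h2v : (2 : ZMod (N/e)) * (v : ZMod (N/e)) = 0 := by linear_combination -hv'
  have h2e : (2 : ZMod e) = 0 := by
    have h4 := congrArg (fun z => z * ((u⁻¹ : (ZMod e)ˣ) : ZMod e)) h2u
    simpa [mul_assoc, Units.mul_inv] using h4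
  have h2ne : (2 : ZMod (N/e)) = 0 := by
    have h4 := congrArg (fun z => z * ((v⁻¹ : (ZMod (N/e))ˣ) : ZMod (N/e))) h2v
    simpa [mul_assoc, Units.mul_inv] using h4
  have hdvd_e : (e : ℕ) ∣ 2 := (ZMod.natCast_eq_zero_iff 2 e).mp (by exact_mod_cast h2e)
  have hdvd_ne : (N / e) ∣ 2 :=
    (ZMod.natCast_eq_zero_iff 2 (N/e)).mp (by exact_mod_cast h2ne)
  have hNe : (e : ℕ) * (N / e) = N := Nat.mul_div_cancel' heN
  have hN4 : N ∣ 4 := by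
    rw [← hNe]
    have := mul_dvd_mul hdvd_e hdvd_ne
    norm_num at this
    exact this
  have : N ≤ 4 := Nat.le_of_dvd (by norm_num) hN4
  omega

end DCH2

/-- For `N₀ > 4`, the number of double cosets `Γ₁(N₀)\SL₂(ℤ)/Γ_∞`, where
`Γ_∞` is the stabilizer of the cusp `∞`, generated by `T` and `-I`, satisfies
`2·#(Γ₁(N₀)\SL₂(ℤ)/Γ_∞) = ∑_{d ∣ N₀} φ(d)·φ(N₀/d)`. -/
theorem card_double_cosets_gamma1_gammaInf (N₀ : ℕ) (h : 4 < N₀) :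
    2 * Nat.card (DoubleCoset.Quotient
        (↑(Gamma1 N₀) : Set (Matrix.SpecialLinearGroup (Fin 2) ℤ))
        (↑(Subgroup.closure {ModularGroup.T, -1}) :
          Set (Matrix.SpecialLinearGroup (Fin 2) ℤ))) =
      ∑ d ∈ N₀.divisors, d.totient * (N₀ / d).totient := by
  haveI : NeZero N₀ := ⟨by omega⟩
  haveI inst1 : ∀ i : ↥N₀.divisors, NeZero (i : ℕ) := fun i => DCH2.nez_e N₀ i.2
  haveI inst2 : ∀ i : ↥N₀.divisors, NeZero (N₀ / (i : ℕ)) := fun i => DCH2.nez_ne N₀ i.2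
  have hbij : Function.Bijective (DCH2.Fbar N₀) :=
    ⟨DCH2.Fbar_injective N₀, DCH2.Fbar_surjective N₀⟩
  have h1 : Nat.card (DoubleCoset.Quotient
        (↑(Gamma1 N₀) : Set (Matrix.SpecialLinearGroup (Fin 2) ℤ))
        (↑(Subgroup.closure {ModularGroup.T, -1}) :
          Set (Matrix.SpecialLinearGroup (Fin 2) ℤ))) =
      Nat.card (Quot (fun x y : DCH2.A N₀ => y = DCH2.sig N₀ x)) :=
    Nat.card_congr (Equiv.ofBijective _ hbij)
  rw [h1, ← DCHelper.card_quot_invol (DCH2.sig N₀) (DCH2.sig_invol N₀) (DCH2.sig_free N₀ h)]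
  rw [Nat.card_eq_fintype_card, Fintype.card_sigma]
  rw [← Finset.sum_coe_sort N₀.divisors (fun d => d.totient * (N₀ / d).totient)]
  apply Finset.sum_congr rfl
  intro i _
  rw [Fintype.card_prod, ZMod.card_units_eq_totient, ZMod.card_units_eq_totient]
end

section
/- Let ρ be a finite-dimensional representation of SL₂(ℤ) of level N (kernel contains Γ(N)) and N₀ a multiple of N. Then dim H⁰(ρ_{N₀}^∨ ⊗ ρ_{N₀}^∨ ⊗ ρ) ≤ #(Γ₁(N₀)\SL₂(ℤ)/Γ₁(N₀)) · dim(ρ), where ρ_{N₀} = Ind_{Γ₁(N₀)}^{SL₂(ℤ)} 𝟙. -/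
open CategoryTheory MonoidalCategory CongruenceSubgroup

local notation "SL2Z" => Matrix.SpecialLinearGroup (Fin 2) ℤ

/-- The permutation representation `ρ_{N₀} = Ind_{Γ₁(N₀)}^{SL₂(ℤ)} 𝟙` of `SL₂(ℤ)` on the
coset space `SL₂(ℤ)/Γ₁(N₀)`. -/
noncomputable def rhoInd (N₀ : ℕ) :
    Representation ℂ SL2Z ((SL2Z ⧸ Gamma1 N₀) →₀ ℂ) :=
  { toFun := fun g => Finsupp.lmapDomain ℂ ℂ (g • ·)
    map_one' := by ext; simp
    map_mul' := fun x y => by ext; simp [mul_smul] }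

/-!
An invariant `w` of `ℂ[X]^∨ ⊗ ℂ[X]^∨ ⊗ V` with `X = G/Γ` finite is determined by its values
`w(x₁, x₂) ∈ V` at pairs of points. These values are `G`-equivariant, so `w` is determined by its
values at one pair `(Γ, gΓ)` in each `G`-orbit on `X × X`, and these orbits are the double cosets
`ΓgΓ`; this gives the bound `#(Γ\G/Γ) · dim V`.

For `N₀ = 0` the double coset space is infinite, so `Nat.card` of it is `0` and the bound claims
`finrank = 0`. This holds because the invariants are infinite-dimensional when `V ≠ 0`: for every
multiple `M` of `N`, the double cosets of `[[1, 0], [c, 1]]` with `c` a unit mod `M` have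
stabilisers inside `Γ(M) ⊆ ker ρ`, so each carries an invariant at level `Γ₁(M)` taking an
arbitrary value `v` at `(Γ₁(M), [[1, 0], [c, 1]] Γ₁(M))`; pulled back along
`SL₂(ℤ)/Γ₁(0) → SL₂(ℤ)/Γ₁(M)` they give `φ(M)` independent invariants at level `Γ₁(0)`.
-/

lemma linearIndependent_of_apply_eq_ite {ι K W U : Type} [Field K] [AddCommGroup W] [Module K W]
    [AddCommGroup U] [Module K U] [DecidableEq ι] {y : ι → W} (e : ι → W →ₗ[K] U) {u : U}
    (hu : u ≠ 0) (h : ∀ i j, e i (y j) = if i = j then u else 0) : LinearIndependent K y := by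
  rw [linearIndependent_iff']
  intro s c hs i hi
  have := congrArg (e i) hs
  simp only [map_sum, map_smul, h, smul_ite, smul_zero, Finset.sum_ite_eq, if_pos hi,
    map_zero] at this
  exact (smul_eq_zero.1 this).resolve_right hu

noncomputable def permRep (G : Type) [Group G] (X : Type) [MulAction G X] :
    Representation ℂ G (X →₀ ℂ) :=
  { toFun := fun g => Finsupp.lmapDomain ℂ ℂ (g • ·)
    map_one' := by ext; simp
    map_mul' := fun x y => by ext; simp [mul_smul] }

open scoped TensorProduct

abbrev TripleTensor (X V : Type) [AddCommGroup V] [Module ℂ V] : Type :=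
  Module.Dual ℂ (X →₀ ℂ) ⊗[ℂ] (Module.Dual ℂ (X →₀ ℂ) ⊗[ℂ] V)

noncomputable abbrev tripleRep {G : Type} [Group G] (X : Type) [MulAction G X] {V : Type}
    [AddCommGroup V] [Module ℂ V] (ρ : Representation ℂ G V) : Rep ℂ G :=
  Rep.of (permRep G X).dual ⊗ (Rep.of (permRep G X).dual ⊗ Rep.of ρ)

section TripleTensor

variable {G : Type} [Group G] {X : Type} [MulAction G X] {V : Type} [AddCommGroup V]
  [Module ℂ V] (ρ : Representation ℂ G V)

lemma permRep_single (g : G) (x : X) (r : ℂ) :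
    permRep G X g (Finsupp.single x r) = Finsupp.single (g • x) r :=
  Finsupp.mapDomain_single

variable (V) in
noncomputable def evalPair (z : X × X) : TripleTensor X V →ₗ[ℂ] V :=
  LinearMap.applyₗ (Finsupp.single z.2 1) ∘ₗ dualTensorHom ℂ (X →₀ ℂ) V ∘ₗ
    LinearMap.applyₗ (Finsupp.single z.1 1) ∘ₗ dualTensorHom ℂ (X →₀ ℂ) _

lemma evalPair_tmul (z : X × X) (φ ψ : Module.Dual ℂ (X →₀ ℂ)) (v : V) :
    evalPair V z (φ ⊗ₜ (ψ ⊗ₜ v)) = φ (Finsupp.single z.1 1) • ψ (Finsupp.single z.2 1) • v := by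
  simp [evalPair, smul_smul]

lemma evalPair_tripleRep (g : G) (z : X × X) (w : TripleTensor X V) :
    evalPair V (g • z) ((tripleRep X ρ).ρ g w) = ρ g (evalPair V z w) := by
  refine LinearMap.congr_fun (TensorProduct.ext_threefold'
    (g := evalPair V (g • z) ∘ₗ (tripleRep X ρ).ρ g) (h := ρ g ∘ₗ evalPair V z)
    fun φ ψ v => ?_) w
  simp [evalPair_tmul, Representation.dual_apply, Module.Dual.transpose_apply, permRep_single]

lemma evalPair_smul_of_mem_invariants {w : TripleTensor X V}
    (hw : w ∈ (tripleRep X ρ).ρ.invariants) (g : G) (z : X × X) :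
    evalPair V (g • z) w = ρ g (evalPair V z w) := by
  conv_lhs => rw [← (hw g : (tripleRep X ρ).ρ g w = w)]
  exact evalPair_tripleRep ρ g z w

lemma eq_zero_of_evalPair_eq_zero [Finite X] {w : TripleTensor X V}
    (h : ∀ z, evalPair V z w = 0) : w = 0 := by
  apply (dualTensorHom_bijective (R := ℂ) (M := X →₀ ℂ) (N := _)).1
  refine Finsupp.lhom_ext' fun x₁ => LinearMap.ext_ring ?_
  apply (dualTensorHom_bijective (R := ℂ) (M := X →₀ ℂ) (N := V)).1
  refine Finsupp.lhom_ext' fun x₂ => LinearMap.ext_ring ?_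
  simpa [evalPair] using h (x₁, x₂)

lemma exists_evalPair_eq [Finite X] (F : X × X → V) :
    ∃ w : TripleTensor X V, ∀ z, evalPair V z w = F z := by
  classical
  have := Fintype.ofFinite X
  refine ⟨∑ z : X × X, Finsupp.lapply z.1 ⊗ₜ (Finsupp.lapply z.2 ⊗ₜ F z), fun z => ?_⟩
  simp [evalPair_tmul, Finsupp.single_apply, Fintype.sum_prod_type]

lemma exists_mem_invariants_evalPair_eq [Finite X] (F : X × X → V)
    (hF : ∀ (g : G) z, F (g • z) = ρ g (F z)) :
    ∃ w ∈ (tripleRep X ρ).ρ.invariants, ∀ z, evalPair V z w = F z := by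
  obtain ⟨w, hw⟩ := exists_evalPair_eq F
  refine ⟨w, fun g => ?_, hw⟩
  rw [← sub_eq_zero]
  refine eq_zero_of_evalPair_eq_zero fun z => ?_
  have := evalPair_tripleRep ρ g (g⁻¹ • z) w
  rw [smul_inv_smul] at this
  rw [map_sub, this, hw, hw, ← hF, smul_inv_smul, sub_self]

end TripleTensor

section OrbitExtension

variable {G Z V : Type} [Group G] [MulAction G Z] [AddCommGroup V] [Module ℂ V]
  (ρ : Representation ℂ G V) {z₀ : Z} {v : V}

open Classical in
noncomputable def orbitExtension (z₀ : Z) (v : V) (z : Z) : V :=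
  if h : z ∈ MulAction.orbit G z₀ then ρ (MulAction.mem_orbit_iff.1 h).choose v else 0

lemma orbitExtension_smul_base (hv : ∀ a ∈ MulAction.stabilizer G z₀, ρ a v = v) (g : G) :
    orbitExtension ρ z₀ v (g • z₀) = ρ g v := by
  have h := MulAction.mem_orbit z₀ g
  rw [orbitExtension, dif_pos h]
  obtain ha := (MulAction.mem_orbit_iff.1 h).choose_spec
  set a := (MulAction.mem_orbit_iff.1 h).choose
  have hstab : g⁻¹ * a ∈ MulAction.stabilizer G z₀ := by
    rw [MulAction.mem_stabilizer_iff, mul_smul, ha, inv_smul_smul]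
  calc ρ a v = ρ g (ρ (g⁻¹ * a) v) := by
        rw [← Module.End.mul_apply, ← map_mul, mul_inv_cancel_left]
    _ = ρ g v := by rw [hv _ hstab]

lemma orbitExtension_base (hv : ∀ a ∈ MulAction.stabilizer G z₀, ρ a v = v) :
    orbitExtension ρ z₀ v z₀ = v := by
  simpa using orbitExtension_smul_base ρ hv 1

lemma orbitExtension_smul (hv : ∀ a ∈ MulAction.stabilizer G z₀, ρ a v = v) (g : G) (z : Z) :
    orbitExtension ρ z₀ v (g • z) = ρ g (orbitExtension ρ z₀ v z) := by
  by_cases hz : z ∈ MulAction.orbit G z₀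
  · obtain ⟨a, rfl⟩ := MulAction.mem_orbit_iff.1 hz
    rw [← mul_smul, orbitExtension_smul_base ρ hv, orbitExtension_smul_base ρ hv, map_mul,
      Module.End.mul_apply]
  · have hgz : g • z ∉ MulAction.orbit G z₀ := fun h =>
      hz (by simpa using MulAction.mem_orbit_of_mem_orbit g⁻¹ h)
    rw [orbitExtension, orbitExtension, dif_neg hz, dif_neg hgz, map_zero]

lemma orbitExtension_of_notMem {z : Z} (hz : z ∉ MulAction.orbit G z₀) :
    orbitExtension ρ z₀ v z = 0 :=
  dif_neg hz

end OrbitExtension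

section Comap

variable {G X Y V : Type} [Group G] [MulAction G X] [MulAction G Y] [AddCommGroup V]
  [Module ℂ V] (ρ : Representation ℂ G V) (f : X →[G] Y)

noncomputable def TripleTensor.comap : TripleTensor Y V →ₗ[ℂ] TripleTensor X V :=
  TensorProduct.map (Finsupp.lmapDomain ℂ ℂ f).dualMap
    (TensorProduct.map (Finsupp.lmapDomain ℂ ℂ f).dualMap LinearMap.id)

lemma permRep_dual_dualMap_lmapDomain (g : G) (φ : Module.Dual ℂ (Y →₀ ℂ)) :
    (permRep G X).dual g ((Finsupp.lmapDomain ℂ ℂ f).dualMap φ) =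
      (Finsupp.lmapDomain ℂ ℂ f).dualMap ((permRep G Y).dual g φ) := by
  ext x
  simp [Representation.dual_apply, Module.Dual.transpose_apply, permRep_single]

lemma comap_mem_invariants {w : TripleTensor Y V} (hw : w ∈ (tripleRep Y ρ).ρ.invariants) :
    TripleTensor.comap f w ∈ (tripleRep X ρ).ρ.invariants := by
  intro g
  have hcomm : (tripleRep X ρ).ρ g ∘ₗ TripleTensor.comap f =
      TripleTensor.comap f ∘ₗ (tripleRep Y ρ).ρ g :=
    TensorProduct.ext_threefold' fun φ ψ v => by
      simp [TripleTensor.comap, permRep_dual_dualMap_lmapDomain, -Representation.dual_apply]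
  exact (LinearMap.congr_fun hcomm w).trans (congrArg _ (hw g))

lemma evalPair_comap (z : X × X) (w : TripleTensor Y V) :
    evalPair V z (TripleTensor.comap f w) = evalPair V (f z.1, f z.2) w := by
  refine LinearMap.congr_fun (TensorProduct.ext_threefold'
    (g := evalPair V z ∘ₗ TripleTensor.comap f) (h := evalPair V (f z.1, f z.2))
    fun φ ψ v => ?_) w
  simp [TripleTensor.comap, evalPair_tmul]

end Comap

section DoubleCoset

variable {G : Type} [Group G] (Γ : Subgroup G)

lemma exists_smul_eq_mk_one_mk_out (z : (G ⧸ Γ) × (G ⧸ Γ)) :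
    ∃ (g : G) (d : DoubleCoset.Quotient (Γ : Set G) Γ),
      g • (((1 : G) : G ⧸ Γ), ((d.out : G) : G ⧸ Γ)) = z := by
  obtain ⟨x, y⟩ := z
  induction x using QuotientGroup.induction_on with | H a =>
  induction y using QuotientGroup.induction_on with | H b =>
  obtain ⟨h, k, hh, hk, hout⟩ := DoubleCoset.mk_out_eq_mul Γ Γ (a⁻¹ * b)
  refine ⟨a * h⁻¹, DoubleCoset.mk Γ Γ (a⁻¹ * b), ?_⟩
  simp only [Prod.smul_mk, MulAction.Quotient.smul_mk, smul_eq_mul, hout, Prod.mk.injEq]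
  constructor
  · exact QuotientGroup.eq.2 (by simpa using hh)
  · exact QuotientGroup.eq.2 (by simpa [mul_assoc] using hk)

lemma doubleCoset_mk_eq_of_smul_eq {a g g' : G}
    (h : a • (((1 : G) : G ⧸ Γ), (g : G ⧸ Γ)) = (((1 : G) : G ⧸ Γ), (g' : G ⧸ Γ))) :
    DoubleCoset.mk Γ Γ g = DoubleCoset.mk Γ Γ g' := by
  simp only [Prod.smul_mk, MulAction.Quotient.smul_mk, smul_eq_mul, Prod.mk.injEq,
    QuotientGroup.eq] at h
  refine (DoubleCoset.eq Γ Γ g g').2 ⟨a, by simpa using h.1, _, h.2, by group⟩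

lemma finite_doubleCoset_quotient [Finite (G ⧸ Γ)] :
    Finite (DoubleCoset.Quotient (Γ : Set G) Γ) := by
  refine Finite.of_surjective (fun q : G ⧸ Γ => DoubleCoset.mk Γ Γ q.out) fun d => ?_
  obtain ⟨k, hk⟩ := QuotientGroup.mk_out_eq_mul Γ d.out
  refine ⟨d.out, ?_⟩
  dsimp only
  rw [hk]
  exact ((DoubleCoset.eq Γ Γ _ _).2 ⟨1, Γ.one_mem, k⁻¹, Γ.inv_mem k.2, by group⟩).trans
    (DoubleCoset.out_eq' Γ Γ d)

lemma mem_stabilizer_mk_one_mk_iff {a g : G} :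
    a ∈ MulAction.stabilizer G (((1 : G) : G ⧸ Γ), (g : G ⧸ Γ)) ↔ a ∈ Γ ∧ g⁻¹ * a * g ∈ Γ := by
  simp only [MulAction.mem_stabilizer_iff, Prod.smul_mk, MulAction.Quotient.smul_mk, smul_eq_mul,
    Prod.mk.injEq, QuotientGroup.eq, mul_one, mul_inv_rev, Γ.inv_mem_iff]
  constructor <;> rintro ⟨h₁, h₂⟩ <;> exact ⟨h₁, by simpa [mul_assoc] using Γ.inv_mem h₂⟩

variable {V : Type} [AddCommGroup V] [Module ℂ V] [FiniteDimensional ℂ V]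
  (ρ : Representation ℂ G V)

theorem finrank_invariants_tripleRep_le [Finite (G ⧸ Γ)] :
    Module.finrank ℂ (tripleRep (G ⧸ Γ) ρ).ρ.invariants ≤
      Nat.card (DoubleCoset.Quotient (Γ : Set G) Γ) * Module.finrank ℂ V := by
  have := finite_doubleCoset_quotient Γ
  have := Fintype.ofFinite (DoubleCoset.Quotient (Γ : Set G) Γ)
  let L : (tripleRep (G ⧸ Γ) ρ).ρ.invariants →ₗ[ℂ] DoubleCoset.Quotient (Γ : Set G) Γ → V :=
    LinearMap.pi fun d => evalPair V (((1 : G) : G ⧸ Γ), ((d.out : G) : G ⧸ Γ)) ∘ₗ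
      Submodule.subtype _
  have hL : Function.Injective L := by
    rw [← LinearMap.ker_eq_bot, LinearMap.ker_eq_bot']
    intro w hw
    refine Subtype.ext (eq_zero_of_evalPair_eq_zero fun z => ?_)
    obtain ⟨g, d, rfl⟩ := exists_smul_eq_mk_one_mk_out Γ z
    rw [evalPair_smul_of_mem_invariants ρ w.2]
    exact (congrArg (ρ g) (congrFun hw d)).trans (map_zero _)
  calc Module.finrank ℂ (tripleRep (G ⧸ Γ) ρ).ρ.invariants
      ≤ Module.finrank ℂ (DoubleCoset.Quotient (Γ : Set G) Γ → V) :=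
        LinearMap.finrank_le_finrank_of_injective hL
    _ = _ := by simp [Module.finrank_pi_fintype, Nat.card_eq_fintype_card]

end DoubleCoset

lemma Gamma_le_Gamma_of_dvd {N M : ℕ} (h : N ∣ M) : Gamma M ≤ Gamma N := by
  intro γ hγ
  simp only [Gamma_mem, ← map_intCast (ZMod.castHom h (ZMod N))] at hγ ⊢
  simp only [hγ, map_one, map_zero, and_self]

lemma Gamma1_le_Gamma1_of_dvd {N M : ℕ} (h : N ∣ M) : Gamma1 M ≤ Gamma1 N := by
  intro γ hγ
  simp only [Gamma1_mem, ← map_intCast (ZMod.castHom h (ZMod N))] at hγ ⊢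
  simp only [hγ, map_one, map_zero, and_self]

lemma intCast_apply_one_zero_eq_of_doubleCoset_mk_eq {M : ℕ} {g g' : SL2Z}
    (h : DoubleCoset.mk (Gamma1 M) (Gamma1 M) g = DoubleCoset.mk (Gamma1 M) (Gamma1 M) g') :
    (g 1 0 : ZMod M) = (g' 1 0 : ZMod M) := by
  obtain ⟨γ₁, h₁, γ₂, h₂, rfl⟩ := (DoubleCoset.eq _ _ g g').1 h
  rw [Gamma1_mem] at h₁ h₂
  simp only [Matrix.SpecialLinearGroup.coe_mul, Matrix.mul_apply, Fin.sum_univ_two]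
  push_cast
  rw [h₁.2.1, h₁.2.2, h₂.1, h₂.2.2]
  ring

def lowerUnipotent (c : ℤ) : SL2Z :=
  ⟨!![1, 0; c, 1], by simp [Matrix.det_fin_two_of]⟩

@[simp]
lemma coe_lowerUnipotent (c : ℤ) :
    (lowerUnipotent c : Matrix (Fin 2) (Fin 2) ℤ) = !![1, 0; c, 1] := rfl

lemma infinite_doubleCoset_quotient_Gamma1_zero :
    Infinite (DoubleCoset.Quotient (Gamma1 0 : Set SL2Z) (Gamma1 0)) :=
  Infinite.of_injective (fun c => DoubleCoset.mk (Gamma1 0) (Gamma1 0) (lowerUnipotent c))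
    fun _ _ h => by simpa using intCast_apply_one_zero_eq_of_doubleCoset_mk_eq h

lemma mem_Gamma_of_conj_lowerUnipotent_mem_Gamma1 {M : ℕ} {c : ℤ} (hc : IsUnit (c : ZMod M))
    {a : SL2Z} (ha : a ∈ Gamma1 M)
    (hconj : (lowerUnipotent c)⁻¹ * a * lowerUnipotent c ∈ Gamma1 M) : a ∈ Gamma M := by
  have h00 : ((lowerUnipotent c)⁻¹ * a * lowerUnipotent c) 0 0 = a 0 0 + a 0 1 * c := by
    simp [Matrix.SpecialLinearGroup.coe_inv, Matrix.adjugate_fin_two, Matrix.mul_apply,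
      Fin.sum_univ_two, Matrix.vecMul, dotProduct]
  rw [Gamma1_mem, h00] at hconj
  rw [Gamma1_mem] at ha
  have h01 : (a 0 1 : ZMod M) * c = 0 := by
    push_cast at hconj
    linear_combination hconj.1 - ha.1
  exact Gamma_mem.2 ⟨ha.1, (hc.mul_left_eq_zero).1 h01, ha.2.2, ha.2.1⟩

section LevelZero

variable {V : Type} [AddCommGroup V] [Module ℂ V] (ρ : Representation ℂ SL2Z V)

def Gamma1ZeroQuotientMap (M : ℕ) : (SL2Z ⧸ Gamma1 0) →[SL2Z] (SL2Z ⧸ Gamma1 M) where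
  toFun := Subgroup.quotientMapOfLE (Gamma1_le_Gamma1_of_dvd (dvd_zero M))
  map_smul' g q := by
    induction q using QuotientGroup.induction_on
    rfl

lemma exists_linearIndependent_mem_invariants_Gamma1_zero {N M : ℕ} [NeZero M] (hNM : N ∣ M)
    (hlevel : ∀ γ ∈ Gamma N, ρ γ = 1) {v : V} (hv : v ≠ 0) :
    ∃ y : (ZMod M)ˣ → (tripleRep (SL2Z ⧸ Gamma1 0) ρ).ρ.invariants, LinearIndependent ℂ y := by
  classical
  let g : (ZMod M)ˣ → SL2Z := fun u => lowerUnipotent (u : ZMod M).cast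
  have hg : ∀ u, ((g u 1 0 : ℤ) : ZMod M) = u := fun u => ZMod.intCast_zmod_cast _
  let z : (ZMod M)ˣ → (SL2Z ⧸ Gamma1 M) × (SL2Z ⧸ Gamma1 M) :=
    fun u => (((1 : SL2Z) : SL2Z ⧸ Gamma1 M), ((g u : SL2Z) : SL2Z ⧸ Gamma1 M))
  have hstab : ∀ u, ∀ a ∈ MulAction.stabilizer SL2Z (z u), ρ a v = v := by
    intro u a ha
    rw [mem_stabilizer_mk_one_mk_iff] at ha
    have hunit : IsUnit (((u : ZMod M).cast : ℤ) : ZMod M) := by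
      rw [ZMod.intCast_zmod_cast]; exact u.isUnit
    rw [hlevel a (Gamma_le_Gamma_of_dvd hNM
      (mem_Gamma_of_conj_lowerUnipotent_mem_Gamma1 hunit ha.1 ha.2))]
    rfl
  choose w hw hev using fun u => exists_mem_invariants_evalPair_eq ρ
    (orbitExtension ρ (z u) v) (orbitExtension_smul ρ (hstab u))
  refine ⟨fun u => ⟨TripleTensor.comap (Gamma1ZeroQuotientMap M) (w u),
    comap_mem_invariants ρ _ (hw u)⟩, linearIndependent_of_apply_eq_ite
      (fun u => evalPair V (((1 : SL2Z) : SL2Z ⧸ Gamma1 0), ((g u : SL2Z) : SL2Z ⧸ Gamma1 0)) ∘ₗ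
        Submodule.subtype _) hv fun u u' => ?_⟩
  simp only [LinearMap.comp_apply, Submodule.subtype_apply, evalPair_comap]
  refine (hev u' (z u)).trans ?_
  split_ifs with h
  · exact h ▸ orbitExtension_base ρ (hstab u)
  · refine orbitExtension_of_notMem ρ fun hmem => h ?_
    obtain ⟨a, ha⟩ := MulAction.mem_orbit_iff.1 hmem
    have := intCast_apply_one_zero_eq_of_doubleCoset_mk_eq (doubleCoset_mk_eq_of_smul_eq _ ha)
    rw [hg, hg] at this
    exact (Units.ext this).symm

lemma not_finite_invariants_Gamma1_zero {N : ℕ} (hN : 0 < N) (hlevel : ∀ γ ∈ Gamma N, ρ γ = 1)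
    [Nontrivial V] : ¬ Module.Finite ℂ (tripleRep (SL2Z ⧸ Gamma1 0) ρ).ρ.invariants := by
  intro hfin
  obtain ⟨v, hv⟩ := exists_ne (0 : V)
  set d := Module.finrank ℂ (tripleRep (SL2Z ⧸ Gamma1 0) ρ).ρ.invariants
  obtain ⟨p, hpd, hp⟩ := Nat.exists_infinite_primes (d + 2)
  have : NeZero (N * p) := ⟨(Nat.mul_pos hN hp.pos).ne'⟩
  obtain ⟨y, hy⟩ := exists_linearIndependent_mem_invariants_Gamma1_zero ρ
    (Dvd.intro p rfl) hlevel hv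
  have hcard := hy.fintype_card_le_finrank
  rw [ZMod.card_units_eq_totient] at hcard
  have htot : Nat.totient p ≤ Nat.totient (N * p) :=
    (Nat.le_mul_of_pos_left _ (Nat.totient_pos.2 hN)).trans
      (Nat.totient_super_multiplicative N p)
  rw [Nat.totient_prime hp] at htot
  omega

lemma finrank_invariants_Gamma1_zero {N : ℕ} (hN : 0 < N) (hlevel : ∀ γ ∈ Gamma N, ρ γ = 1) :
    Module.finrank ℂ (tripleRep (SL2Z ⧸ Gamma1 0) ρ).ρ.invariants = 0 := by
  rcases subsingleton_or_nontrivial V with _ | _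
  · have : Subsingleton (TripleTensor (SL2Z ⧸ Gamma1 0) V) := inferInstance
    exact Module.finrank_zero_of_subsingleton
  · exact Module.finrank_of_not_finite (not_finite_invariants_Gamma1_zero ρ hN hlevel)

end LevelZero

theorem triple_product_dim_bound_general (N N₀ : ℕ) (hN : 0 < N)
    {V : Type} [AddCommGroup V] [Module ℂ V] [FiniteDimensional ℂ V]
    (ρ : Representation ℂ SL2Z V)
    (hlevel : ∀ γ ∈ Gamma N, ρ γ = 1) :
    Module.finrank ℂ
      ((Rep.of (rhoInd N₀).dual ⊗ (Rep.of (rhoInd N₀).dual ⊗ Rep.of ρ) :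
          Rep ℂ SL2Z).ρ.invariants) ≤
      Nat.card (DoubleCoset.Quotient (↑(Gamma1 N₀) : Set SL2Z) (↑(Gamma1 N₀) : Set SL2Z)) *
        Module.finrank ℂ V := by
  rcases Nat.eq_zero_or_pos N₀ with rfl | hN₀
  · have := infinite_doubleCoset_quotient_Gamma1_zero
    rw [Nat.card_eq_zero_of_infinite, zero_mul]
    exact (finrank_invariants_Gamma1_zero ρ hN hlevel).le
  · have : NeZero N₀ := ⟨hN₀.ne'⟩
    exact finrank_invariants_tripleRep_le (Gamma1 N₀) ρ

/-- For a finite-dimensional representation `ρ` of `SL₂(ℤ)` of level `N`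
(i.e. whose kernel contains `Γ(N)`) and a multiple `N₀` of `N`, we have
`dim H⁰(ρ_{N₀}^∨ ⊗ ρ_{N₀}^∨ ⊗ ρ) ≤ #(Γ₁(N₀)\SL₂(ℤ)/Γ₁(N₀)) · dim ρ`. -/
theorem triple_product_dim_bound (N N₀ : ℕ) (hN : 0 < N) (hdvd : N ∣ N₀)
    {V : Type} [AddCommGroup V] [Module ℂ V] [FiniteDimensional ℂ V]
    (ρ : Representation ℂ SL2Z V)
    (hlevel : ∀ γ ∈ Gamma N, ρ γ = 1) :
    Module.finrank ℂ
      ((Rep.of (rhoInd N₀).dual ⊗ (Rep.of (rhoInd N₀).dual ⊗ Rep.of ρ) :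
          Rep ℂ SL2Z).ρ.invariants) ≤
      Nat.card (DoubleCoset.Quotient (↑(Gamma1 N₀) : Set SL2Z) (↑(Gamma1 N₀) : Set SL2Z)) *
        Module.finrank ℂ V :=
  triple_product_dim_bound_general N N₀ hN ρ hlevel
end

section
/- Let G be a group, K, H subgroups with H of finite index, and ρ a finite-dimensional complex representation of H. Then Res_K^G Ind_H^G ρ ≅ ⊕_{g ∈ H\G/K} Ind_{K ∩ g⁻¹Hg}^K ρ^g, where ρ^g(x) = ρ(gxg⁻¹) for x ∈ K ∩ g⁻¹Hg (Mackey's double coset theorem). -/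
/-- The space of `G`-equivariant linear maps between (the spaces of) two
representations, as a submodule of all linear maps. -/
def equivariantHoms {G V W : Type*} [Group G] [AddCommGroup V] [Module ℂ V]
    [AddCommGroup W] [Module ℂ W]
    (ρ : Representation ℂ G V) (σ : Representation ℂ G W) : Submodule ℂ (V →ₗ[ℂ] W) where
  carrier := {T | ∀ g : G, T ∘ₗ ρ g = σ g ∘ₗ T}
  add_mem' := by
    intro a b ha hb g
    simp only [LinearMap.add_comp, LinearMap.comp_add, ha g, hb g]
  zero_mem' := by
    intro g
    simp
  smul_mem' := by
    intro c a ha g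
    simp only [LinearMap.smul_comp, LinearMap.comp_smul, ha g]

/-- The carrier of the representation of `G` induced from a representation `ρ` of a
subgroup `H ≤ G`, realized as the space of functions `f : G → V` with
`f (g·h) = ρ(h)⁻¹ (f g)`.  (For finite-index `H` this realizes `ℂ[G] ⊗_{ℂ[H]} ρ`.) -/
def indCarrier {G : Type*} [Group G] (H : Subgroup G) {V : Type*} [AddCommGroup V]
    [Module ℂ V] (ρ : Representation ℂ H V) : Submodule ℂ (G → V) where
  carrier := {f | ∀ (g : G) (h : H), f (g * h) = ρ h⁻¹ (f g)}
  add_mem' := by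
    intro a b ha hb g h
    simp [ha g h, hb g h]
  zero_mem' := by
    intro g h
    simp
  smul_mem' := by
    intro c a ha g h
    simp [ha g h]

/-- The induced representation `Ind_H^G ρ`, acting on `indCarrier H ρ` by left
translation. -/
noncomputable def indRep {G : Type*} [Group G] (H : Subgroup G) {V : Type*} [AddCommGroup V]
    [Module ℂ V] (ρ : Representation ℂ H V) : Representation ℂ G (indCarrier H ρ) where
  toFun g :=
    { toFun := fun f => ⟨fun x => f.1 (g⁻¹ * x), by
        intro x h
        simpa [mul_assoc] using f.2 (g⁻¹ * x) h⟩
      map_add' := fun f₁ f₂ => rfl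
      map_smul' := fun c f => rfl }
  map_one' := by
    ext f x
    simp
  map_mul' := by
    intro g₁ g₂
    ext f x
    simp [mul_assoc]

open DirectSum

/-- The isomorphism `K ∩ g⁻¹Hg → H`, `x ↦ g·x·g⁻¹`, along which the conjugate
representation `ρ^g` is defined. -/
def conjHom {G : Type*} [Group G] (H K : Subgroup G) (g : G) :
    ↥((Subgroup.map (MulAut.conj g⁻¹).toMonoidHom H).subgroupOf K) →* ↥H where
  toFun x := ⟨g * ((x : ↥K) : G) * g⁻¹, by
    have hx := x.2
    rw [Subgroup.mem_subgroupOf] at hx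
    obtain ⟨h, hh, hxx⟩ := Subgroup.mem_map.mp hx
    rw [← hxx]
    simpa [MulAut.conj_apply, mul_assoc] using hh⟩
  map_one' := by
    ext
    simp
  map_mul' := by
    intro a b
    ext
    simp [mul_assoc]
    exact mul_assoc ((a : ↥K) : G) ((b : ↥K) : G) g⁻¹

/-!
Restricting `f ∈ Ind_H^G ρ` to the translate `K g⁻¹` of a representative `g` of a double coset
in `H\G/K` gives `k ↦ f (k g⁻¹)`, an element of `Ind_{K ∩ g⁻¹Hg}^K ρ^g`; this is `K`-equivariant
because `K` acts on both sides by left translation. As `G` is the disjoint union of the sets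
`K g⁻¹ H`, the function `f` is determined by these restrictions, and conversely a family `c_g`
glues to `f (k g⁻¹ h) := ρ(h)⁻¹ (c_g k)`, which is well defined precisely because `c_g` transforms
under `K ∩ g⁻¹Hg` through `ρ^g`. Finite index of `H` makes `H\G/K` finite, so the product of the
summands is their direct sum.
-/

instance DoubleCoset.finite_quotient_of_finiteIndex {G : Type*} [Group G] (H K : Subgroup G)
    [H.FiniteIndex] :
    Finite (DoubleCoset.Quotient (H : Set G) K) :=
  Finite.of_surjective (α := G ⧸ H)
    (Quotient.lift (fun g : G => DoubleCoset.mk H K g⁻¹) fun a b hab =>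
      (DoubleCoset.eq H K _ _).2
        ⟨(a⁻¹ * b)⁻¹, H.inv_mem (QuotientGroup.leftRel_apply.1 hab), 1, K.one_mem, by group⟩)
    fun q => ⟨QuotientGroup.mk q.out⁻¹, by simpa using DoubleCoset.out_eq' H K q⟩

namespace Mackey

variable {G : Type*} [Group G] (H K : Subgroup G)

abbrev conjSubgroupOf (g : G) : Subgroup K :=
  (Subgroup.map (MulAut.conj g⁻¹).toMonoidHom H).subgroupOf K

variable {H K} in
theorem mem_conjSubgroupOf {g : G} {x : K} :
    x ∈ conjSubgroupOf H K g ↔ g * x * g⁻¹ ∈ H := by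
  rw [Subgroup.mem_subgroupOf, Subgroup.mem_map_equiv, MulAut.conj_symm_apply, inv_inv]

theorem coe_conjHom_apply (g : G) (x : conjSubgroupOf H K g) :
    (conjHom H K g x : G) = g * x * g⁻¹ := rfl

theorem exists_eq_mul_out_inv_mul (x : G) :
    ∃ k : K, ∃ h : H, x = k * (DoubleCoset.mk H K x⁻¹).out⁻¹ * h := by
  obtain ⟨h, k, hh, hk, hout⟩ := DoubleCoset.mk_out_eq_mul H K x⁻¹
  exact ⟨⟨k, hk⟩, ⟨h, hh⟩, by rw [hout]; group⟩

variable {V : Type*} [AddCommGroup V] [Module ℂ V] (ρ : Representation ℂ H V)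

theorem coe_indRep_apply (g : G) (f : indCarrier H ρ) (x : G) :
    (indRep H ρ g f : G → V) x = f.1 (g⁻¹ * x) := rfl

abbrev Summand (g : G) : Submodule ℂ (K → V) :=
  indCarrier (conjSubgroupOf H K g) (ρ.comp (conjHom H K g))

def restrictAt (g : G) : indCarrier H ρ →ₗ[ℂ] Summand H K ρ g where
  toFun f := ⟨fun k => f.1 (k * g⁻¹), fun k ξ => by
    have hmul : ((k * ξ : K) : G) * g⁻¹ = k * g⁻¹ * conjHom H K g ξ := by
      simp only [coe_conjHom_apply, Subgroup.coe_mul]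
      group
    simp only [hmul, f.2 _ (conjHom H K g ξ), MonoidHom.comp_apply, map_inv]⟩
  map_add' _ _ := rfl
  map_smul' _ _ := rfl

theorem restrictAt_apply (g : G) (f : indCarrier H ρ) (k : K) :
    (restrictAt H K ρ g f).1 k = f.1 (k * g⁻¹) := rfl

theorem restrictAt_indRep (g : G) (k : K) (f : indCarrier H ρ) :
    restrictAt H K ρ g (indRep H ρ k f) =
      indRep _ (ρ.comp (conjHom H K g)) k (restrictAt H K ρ g f) := by
  ext k'
  simp only [restrictAt_apply, coe_indRep_apply, Subgroup.coe_mul, Subgroup.coe_inv, mul_assoc]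

theorem val_mul_inv_mul (f : indCarrier H ρ) (g : G) (k : K) (h : H) :
    f.1 (k * g⁻¹ * h) = ρ h⁻¹ ((restrictAt H K ρ g f).1 k) :=
  f.2 _ h

variable {H K ρ} in
theorem Summand.map_inv_apply_eq_of_mul_eq {g : G} (c : Summand H K ρ g) {k k' : K} {h h' : H}
    (heq : (k : G) * g⁻¹ * h = k' * g⁻¹ * h') : ρ h⁻¹ (c.1 k) = ρ h'⁻¹ (c.1 k') := by
  have hconj : g * ((k⁻¹ * k' : K) : G) * g⁻¹ = ((h * h'⁻¹ : H) : G) := by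
    have hk' : (k' : G) = k * g⁻¹ * h * (h' : G)⁻¹ * g := by rw [heq]; group
    simp only [Subgroup.coe_mul, Subgroup.coe_inv, hk']
    group
  let ξ : conjSubgroupOf H K g :=
    ⟨k⁻¹ * k', mem_conjSubgroupOf.2 (hconj ▸ (h * h'⁻¹).2)⟩
  have hξ : conjHom H K g ξ = h * h'⁻¹ := Subtype.ext hconj
  have hk' : k' = k * (ξ : K) := by simp [ξ]
  rw [hk', c.2 k ξ, MonoidHom.comp_apply, map_inv (conjHom H K g), hξ, ← Module.End.mul_apply,
    ← map_mul]
  congr 2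
  group

noncomputable def restrictAll : indCarrier H ρ →ₗ[ℂ]
    ∀ q : DoubleCoset.Quotient (H : Set G) K, Summand H K ρ q.out :=
  LinearMap.pi fun q => restrictAt H K ρ q.out

theorem restrictAll_injective : Function.Injective (restrictAll H K ρ) := by
  intro f₁ f₂ hf
  ext x
  obtain ⟨k, h, hx⟩ := exists_eq_mul_out_inv_mul H K x
  rw [hx, val_mul_inv_mul, val_mul_inv_mul]
  exact congrArg (fun c => ρ h⁻¹ ((c (DoubleCoset.mk H K x⁻¹)).1 k)) hf

variable {H K ρ}

noncomputable def glue (c : ∀ q : DoubleCoset.Quotient (H : Set G) K, Summand H K ρ q.out)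
    (x : G) : V :=
  ρ (exists_eq_mul_out_inv_mul H K x).choose_spec.choose⁻¹
    ((c (DoubleCoset.mk H K x⁻¹)).1 (exists_eq_mul_out_inv_mul H K x).choose)

theorem glue_eq (c : ∀ q : DoubleCoset.Quotient (H : Set G) K, Summand H K ρ q.out)
    {x : G} {q : DoubleCoset.Quotient (H : Set G) K} (hq : DoubleCoset.mk H K x⁻¹ = q)
    {k : K} {h : H} (hx : x = k * q.out⁻¹ * h) : glue c x = ρ h⁻¹ ((c q).1 k) := by
  subst hq
  exact Summand.map_inv_apply_eq_of_mul_eq (c _)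
    ((exists_eq_mul_out_inv_mul H K x).choose_spec.choose_spec.symm.trans hx)

theorem glue_mem (c : ∀ q : DoubleCoset.Quotient (H : Set G) K, Summand H K ρ q.out) :
    glue c ∈ indCarrier H ρ := by
  intro x h₀
  obtain ⟨k, h, hx⟩ := exists_eq_mul_out_inv_mul H K x
  have hq : DoubleCoset.mk H K (x * h₀)⁻¹ = DoubleCoset.mk H K x⁻¹ :=
    (DoubleCoset.eq H K _ _).2 ⟨h₀, h₀.2, 1, K.one_mem, by group⟩
  have hxh₀ : x * h₀ = k * (DoubleCoset.mk H K x⁻¹).out⁻¹ * (h * h₀ : H) := by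
    conv_lhs => rw [hx]
    rw [Subgroup.coe_mul, mul_assoc _ (h : G)]
  rw [glue_eq c hq hxh₀, glue_eq c rfl hx, mul_inv_rev, map_mul, Module.End.mul_apply]

theorem restrictAt_glue (c : ∀ q : DoubleCoset.Quotient (H : Set G) K, Summand H K ρ q.out)
    (q : DoubleCoset.Quotient (H : Set G) K) :
    restrictAt H K ρ q.out ⟨glue c, glue_mem c⟩ = c q := by
  ext k
  have hq : DoubleCoset.mk H K ((k : G) * q.out⁻¹)⁻¹ = q := by
    conv_rhs => rw [← DoubleCoset.out_eq' H K q]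
    rw [DoubleCoset.eq]
    exact ⟨1, H.one_mem, k, k.2, by group⟩
  rw [restrictAt_apply]
  exact (glue_eq c hq (k := k) (h := 1) (by simp)).trans (by rw [inv_one, map_one]; rfl)

variable (H K ρ)

theorem restrictAll_surjective : Function.Surjective (restrictAll H K ρ) :=
  fun c => ⟨⟨glue c, glue_mem c⟩, funext (restrictAt_glue c)⟩

noncomputable def restrictEquiv : indCarrier H ρ ≃ₗ[ℂ]
    ∀ q : DoubleCoset.Quotient (H : Set G) K, Summand H K ρ q.out :=
  .ofBijective (restrictAll H K ρ) ⟨restrictAll_injective H K ρ, restrictAll_surjective H K ρ⟩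

end Mackey

theorem mackey_double_coset_theorem_general {G : Type*} [Group G] (H K : Subgroup G)
    [H.FiniteIndex] {V : Type*} [AddCommGroup V] [Module ℂ V]
    (ρ : Representation ℂ ↥H V) :
    ∃ e : ↥(indCarrier H ρ) ≃ₗ[ℂ]
        ⨁ (q : DoubleCoset.Quotient (↑H : Set G) (↑K : Set G)),
          ↥(indCarrier ((Subgroup.map (MulAut.conj (Quotient.out q)⁻¹).toMonoidHom
              H).subgroupOf K) (ρ.comp (conjHom H K (Quotient.out q)))),
      ∀ (k : ↥K) (x : ↥(indCarrier H ρ)),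
        e ((indRep H ρ) (↑k : G) x) =
          DFinsupp.mapRange.linearMap
            (fun q => ((indRep _ (ρ.comp (conjHom H K (Quotient.out q))) k) : _ →ₗ[ℂ] _))
            (e x) := by
  have := Fintype.ofFinite (DoubleCoset.Quotient (H : Set G) K)
  exact ⟨(Mackey.restrictEquiv H K ρ).trans (DirectSum.linearEquivFunOnFintype ℂ _ _).symm,
    fun k x => DFinsupp.ext fun q => Mackey.restrictAt_indRep H K ρ q.out k x⟩

/-- Mackey's double coset theorem.  For subgroups `K, H ≤ G` with `H` of
finite index and a finite-dimensional complex representation `ρ` of `H`, we have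
`Res_K^G Ind_H^G ρ ≅ ⊕_{g ∈ H\G/K} Ind_{K ∩ g⁻¹Hg}^K ρ^g`, where `ρ^g(x) = ρ(g·x·g⁻¹)`
and the sum runs over representatives `g = q.out` of the double cosets `H\G/K`. -/
theorem mackey_double_coset_theorem {G : Type*} [Group G] (H K : Subgroup G)
    [H.FiniteIndex] {V : Type*} [AddCommGroup V] [Module ℂ V] [FiniteDimensional ℂ V]
    (ρ : Representation ℂ ↥H V) :
    ∃ e : ↥(indCarrier H ρ) ≃ₗ[ℂ]
        ⨁ (q : DoubleCoset.Quotient (↑H : Set G) (↑K : Set G)),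
          ↥(indCarrier ((Subgroup.map (MulAut.conj (Quotient.out q)⁻¹).toMonoidHom
              H).subgroupOf K) (ρ.comp (conjHom H K (Quotient.out q)))),
      ∀ (k : ↥K) (x : ↥(indCarrier H ρ)),
        e ((indRep H ρ) (↑k : G) x) =
          DFinsupp.mapRange.linearMap
            (fun q => ((indRep _ (ρ.comp (conjHom H K (Quotient.out q))) k) : _ →ₗ[ℂ] _))
            (e x) :=
  mackey_double_coset_theorem_general H K ρ
end
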